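/- Let λ be a nonzero element of the finite field F with λ² = 1, let m ≥ 1, and let g be a monic divisor of x^m − λ in F[x]. Let C ⊆ F^m be the λ-constacyclic code corresponding to the ideal of F[x]/(x^m − λ) generated by g. Then C is LCD (C ∩ C^⊥ = {0}) if and only if g is self-reciprocal and coprime to (x^m − λ)/g in F[x]. -/

import Mathlib

/-!
Under `F^m ≅ {p : deg p < m}`, the dot product of `p` and `q` is the coefficient of `X^(m-1)` in
`p · X^(m-1) q(1/X)`. With `h = (X^m - λ)/g`, the assumption `λ² = 1` gives `g* h* = -λ (X^m - λ)`,
and this identity shows that `p` is orthogonal to `⟨g⟩` iff `h* ∣ p`. Since `deg g + deg h* = m`,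
the code meets its dual trivially iff `g` and `h*` are coprime. Finally `g* h* = -λ g h`: if `g` is
coprime to `h*` it divides `g*`, so `g* = c g`; whenever `g* = c g` we get `h* = -(λ/c) h`, and then
coprimality with `h*` and with `h` are the same condition.
-/

open Polynomial

section Vectors
variable {R : Type*} [Semiring R] {m : ℕ}

lemma coeff_sum_fin_C_mul_X_pow (b : Fin m → R) (k : Fin m) :
    (∑ i : Fin m, C (b i) * X ^ (i : ℕ)).coeff k = b k := by
  simp [Fin.val_inj]

lemma sum_fin_C_coeff_mul_X_pow {p : R[X]} (hp : p.degree < m) :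
    ∑ i : Fin m, C (p.coeff i) * X ^ (i : ℕ) = p :=
  (sum_fin (fun n a => C a * X ^ n) (by simp) hp).trans p.sum_C_mul_X_pow_eq

lemma sum_fin_C_mul_X_pow_eq_zero_iff (b : Fin m → R) :
    ∑ i : Fin m, C (b i) * X ^ (i : ℕ) = 0 ↔ b = 0 := by
  refine ⟨fun hb => funext fun k => ?_, fun hb => by simp [hb]⟩
  rw [← coeff_sum_fin_C_mul_X_pow b k, hb, coeff_zero, Pi.zero_apply]

lemma forall_fin_iff_forall_degree_lt (P : R[X] → Prop) :
    (∀ b : Fin m → R, P (∑ i : Fin m, C (b i) * X ^ (i : ℕ))) ↔ ∀ p : R[X], p.degree < m → P p :=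
  ⟨fun H p hp => sum_fin_C_coeff_mul_X_pow hp ▸ H fun i => p.coeff i,
    fun H b => H _ (degree_sum_fin_lt b)⟩

end Vectors

lemma Ideal.Quotient.mk_mem_span_singleton_mk_iff {R : Type*} [CommRing R] {f g q : R}
    (hgf : g ∣ f) :
    Ideal.Quotient.mk (Ideal.span {f}) q ∈ Ideal.span {Ideal.Quotient.mk (Ideal.span {f}) g}
      ↔ g ∣ q := by
  rw [← Set.image_singleton, ← Ideal.map_span,
    Ideal.mem_quotient_iff_mem (Ideal.span_singleton_le_span_singleton.mpr hgf),
    Ideal.mem_span_singleton]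

section Duality
variable {R : Type*} [CommSemiring R]

def coeffDot (m : ℕ) (p q : R[X]) : R := ∑ k ∈ Finset.range m, p.coeff k * q.coeff k

lemma coeffDot_sum_fin {m : ℕ} (a b : Fin m → R) :
    coeffDot m (∑ i : Fin m, C (a i) * X ^ (i : ℕ)) (∑ i : Fin m, C (b i) * X ^ (i : ℕ))
      = ∑ k, a k * b k := by
  rw [coeffDot, ← Fin.sum_univ_eq_sum_range]
  simp only [coeff_sum_fin_C_mul_X_pow]

lemma coeffDot_eq_coeff_mul_reflect (n : ℕ) (p q : R[X]) :
    coeffDot (n + 1) p q = (p * reflect n q).coeff n := by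
  rw [coeffDot, coeff_mul, Finset.Nat.sum_antidiagonal_eq_sum_range_succ_mk]
  refine Finset.sum_congr rfl fun k hk => ?_
  have hkn : k ≤ n := Nat.lt_succ_iff.mp (Finset.mem_range.mp hk)
  rw [coeff_reflect, revAt_le (Nat.sub_le n k), Nat.sub_sub_self hkn]

lemma coeffDot_mul_eq_coeff {g u : R[X]} {n : ℕ} (hu : u.natDegree ≤ n) (p : R[X]) :
    coeffDot (g.natDegree + n + 1) p (g * u)
      = (p * g.reverse * reflect n u).coeff (g.natDegree + n) := by
  rw [coeffDot_eq_coeff_mul_reflect, reflect_mul g u le_rfl hu, reverse, mul_assoc]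

lemma lcd_iff_coeffDot {m : ℕ} (S : R[X] → Prop) :
    (∀ a : Fin m → R, S (∑ i : Fin m, C (a i) * X ^ (i : ℕ)) →
        (∀ b : Fin m → R, S (∑ i : Fin m, C (b i) * X ^ (i : ℕ)) → ∑ k, a k * b k = 0) → a = 0)
      ↔ ∀ p : R[X], p.degree < m → S p →
        (∀ q : R[X], q.degree < m → S q → coeffDot m p q = 0) → p = 0 := by
  refine (forall_congr' fun a => ?_).trans (forall_fin_iff_forall_degree_lt fun p =>
    S p → (∀ q : R[X], q.degree < m → S q → coeffDot m p q = 0) → p = 0)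
  refine imp_congr_right fun _ => imp_congr ?_ (sum_fin_C_mul_X_pow_eq_zero_iff a).symm
  refine Iff.trans ?_ (forall_fin_iff_forall_degree_lt fun q => S q → coeffDot m _ q = 0)
  simp only [coeffDot_sum_fin]

end Duality

section Domain
variable {R : Type*} [CommRing R] [IsDomain R]

lemma forall_coeffDot_eq_zero_iff {m : ℕ} {g p : R[X]} (hg : g ≠ 0) (hgm : g.natDegree ≤ m) :
    (∀ q : R[X], q.degree < m → g ∣ q → coeffDot m p q = 0) ↔
      ∀ j, g.natDegree ≤ j → j < m → (p * g.reverse).coeff j = 0 := by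
  rcases hgm.eq_or_lt with hm | hm
  · subst hm
    refine iff_of_true (fun q hq hgq => ?_) (fun j hj hj' => absurd hj' (not_lt.mpr hj))
    rw [eq_zero_of_dvd_of_degree_lt hgq (hq.trans_eq (degree_eq_natDegree hg).symm)]
    simp [coeffDot]
  obtain ⟨n, rfl⟩ : ∃ n, m = g.natDegree + n + 1 := ⟨m - g.natDegree - 1, by omega⟩
  constructor
  · intro H j hj hjm
    obtain ⟨i, rfl⟩ := Nat.exists_eq_add_of_le hj
    have hi : i ≤ n := by omega
    have hdeg : (g * X ^ i).degree < ↑(g.natDegree + n + 1) := by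
      rw [degree_mul, degree_X_pow, degree_eq_natDegree hg]
      norm_cast
    have := H (g * X ^ i) hdeg (dvd_mul_right _ _)
    rwa [coeffDot_mul_eq_coeff ((natDegree_X_pow_le i).trans hi), reflect_monomial, revAt_le hi,
      coeff_mul_X_pow', if_pos (by omega),
      show g.natDegree + n - (n - i) = g.natDegree + i by omega] at this
  · rintro H q hq ⟨u, rfl⟩
    rcases eq_or_ne u 0 with rfl | hu
    · simp [coeffDot]
    have hun : u.natDegree ≤ n := by
      have := (natDegree_lt_iff_degree_lt (mul_ne_zero hg hu)).mpr hq
      rw [natDegree_mul hg hu] at this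
      omega
    rw [coeffDot_mul_eq_coeff hun, coeff_mul]
    refine Finset.sum_eq_zero fun ⟨i, k⟩ hik => ?_
    rw [Finset.HasAntidiagonal.mem_antidiagonal] at hik
    dsimp only at hik ⊢
    by_cases hk : k ≤ n
    · rw [H i (by omega) (by omega), zero_mul]
    · rw [coeff_reflect, revAt_eq_self_of_lt (not_le.mp hk),
        coeff_eq_zero_of_natDegree_lt (p := u) (by omega), mul_zero]

end Domain

section Field
variable {F : Type*} [Field F] {lam : F} {m : ℕ}

lemma reverse_X_pow_sub_C (hlam : lam ^ 2 = 1) (m : ℕ) :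
    (X ^ m - C lam : F[X]).reverse = C (-lam) * (X ^ m - C lam) := by
  have hX : (X ^ m : F[X]).reverse = 1 := by
    rw [← mul_one (X ^ m), reverse_X_pow_mul, ← C_1, reverse_C]
  have hC : C lam * C lam = (1 : F[X]) := by rw [← C_mul, ← sq, hlam, C_1]
  rw [sub_eq_add_neg, ← C_neg, reverse_add_C, hX, natDegree_X_pow, C_neg]
  linear_combination -hC

lemma reverse_mul_reverse_of_mul_eq {g h : F[X]} (hlam : lam ^ 2 = 1)
    (hgh : g * h = X ^ m - C lam) : g.reverse * h.reverse = C (-lam) * (X ^ m - C lam) := by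
  rw [← reverse_mul_of_domain, hgh, reverse_X_pow_sub_C hlam]

lemma coeff_zero_ne_zero_of_dvd_X_pow_sub_C {g : F[X]} (hlam : lam ≠ 0) (hm : 1 ≤ m)
    (hg : g ∣ X ^ m - C lam) : g.coeff 0 ≠ 0 := by
  rw [Ne, ← X_dvd_iff]
  intro hX
  have := X_dvd_iff.mp (hX.trans hg)
  simp [coeff_X_pow, show 0 ≠ m by omega, hlam] at this

lemma natDegree_reverse_of_coeff_zero_ne_zero {p : F[X]} (hp : p.coeff 0 ≠ 0) :
    p.reverse.natDegree = p.natDegree := by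
  rw [reverse_natDegree, natTrailingDegree_eq_zero.mpr (.inr hp), Nat.sub_zero]

lemma forall_coeff_mul_eq_zero_iff_dvd (hlam : lam ^ 2 = 1) {d : ℕ} {a b p : F[X]}
    (hab : a * b = C (-lam) * (X ^ m - C lam)) (hb : b ≠ 0) (hd : d + b.natDegree = m)
    (hp : p.degree < m) :
    (∀ j, d ≤ j → j < m → (p * a).coeff j = 0) ↔ b ∣ p := by
  -- multiplying by `a * b` is the identity modulo `X ^ m`
  have key (s : F[X]) : s * a * b = s - X ^ m * (C lam * s) := by
    have hC : C lam * C lam = (1 : F[X]) := by rw [← C_mul, ← sq, hlam, C_1]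
    rw [C_neg] at hab
    linear_combination s * hab + s * hC
  constructor
  · intro H
    set r := p * a
    have hAB := modByMonic_add_div r (X ^ m)
    set A := r %ₘ X ^ m
    have hA : A.degree < d := by
      rw [degree_lt_iff_coeff_zero]
      intro j hj
      by_cases hjm : j < m
      · have := congrArg (coeff · j) hAB
        simp only [coeff_add, X_pow_mul, coeff_mul_X_pow', if_neg (not_le.mpr hjm),
          add_zero] at this
        rw [this, H j hj hjm]
      · exact coeff_eq_zero_of_degree_lt ((degree_modByMonic_lt r (monic_X_pow m)).trans_le
          (by rw [degree_X_pow]; exact_mod_cast not_lt.mp hjm))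
    have hdvd : X ^ m ∣ A * b - p :=
      ⟨-(C lam * p + r /ₘ X ^ m * b), by linear_combination b * hAB + key p⟩
    have hdeg : (A * b - p).degree < (X ^ m : F[X]).degree := by
      rw [degree_X_pow]
      refine (degree_sub_le _ _).trans_lt (max_lt ?_ hp)
      rw [degree_mul, degree_eq_natDegree hb, ← hd, Nat.cast_add]
      exact WithBot.add_lt_add_right WithBot.coe_ne_bot hA
    exact ⟨A, by linear_combination -(eq_zero_of_dvd_of_degree_lt hdvd hdeg)⟩
  · rintro ⟨w, rfl⟩ j hj hjm
    rcases eq_or_ne w 0 with rfl | hw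
    · simp
    have hwd : w.natDegree < d := by
      have := (natDegree_lt_iff_degree_lt (mul_ne_zero hb hw)).mpr hp
      rw [natDegree_mul hb hw] at this
      omega
    rw [show b * w * a = w * a * b by ring, key, coeff_sub, X_pow_mul, coeff_mul_X_pow',
      if_neg (not_le.mpr hjm), coeff_eq_zero_of_natDegree_lt (hwd.trans_le hj), sub_zero]

lemma forall_dvd_dvd_eq_zero_iff_isCoprime {a b : F[X]} (ha : a ≠ 0) (hb : b ≠ 0)
    (hab : a.natDegree + b.natDegree = m) :
    (∀ p : F[X], p.degree < m → a ∣ p → b ∣ p → p = 0) ↔ IsCoprime a b := by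
  classical
  constructor
  · intro H
    by_contra hnc
    set E := EuclideanDomain.gcd a b
    have hE0 : E ≠ 0 := fun h0 => ha (EuclideanDomain.gcd_eq_zero_iff.mp h0).1
    have hE : 0 < E.natDegree := natDegree_pos_iff_degree_pos.mpr
      (degree_pos_of_ne_zero_of_nonunit hE0 (mt EuclideanDomain.gcd_isUnit_iff.mp hnc))
    obtain ⟨s, hs⟩ := EuclideanDomain.gcd_dvd_left a b
    obtain ⟨t, ht⟩ := EuclideanDomain.gcd_dvd_right a b
    have ht0 : t ≠ 0 := by rintro rfl; exact hb (by rw [ht, mul_zero])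
    have hdeg : (a * t).degree < m := by
      rw [← natDegree_lt_iff_degree_lt (mul_ne_zero ha ht0), natDegree_mul ha ht0, ← hab, ht,
        natDegree_mul hE0 ht0]
      omega
    exact mul_ne_zero ha ht0 <| H _ hdeg (dvd_mul_right a t)
      ⟨s, by linear_combination t * hs - s * ht⟩
  · rintro hcop p hp hap hbp
    by_contra hp0
    have := natDegree_le_of_dvd (hcop.mul_dvd hap hbp) hp0
    rw [natDegree_mul ha hb, hab] at this
    exact absurd ((natDegree_lt_iff_degree_lt hp0).mpr hp) (not_lt.mpr this)

lemma reverse_eq_C_mul_of_reverse_mul_reverse {g h : F[X]} {c u : F} (hg : g ≠ 0) (hc : c ≠ 0)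
    (hgc : g.reverse = C c * g) (hgh : g.reverse * h.reverse = C u * (g * h)) :
    h.reverse = C (c⁻¹ * u) * h := by
  have : g * (C c * h.reverse) = g * (C u * h) := by
    linear_combination h.reverse * hgc.symm + hgh
  rw [C_mul, mul_assoc, ← mul_left_cancel₀ hg this, ← mul_assoc, ← C_mul, inv_mul_cancel₀ hc,
    C_1, one_mul]

lemma isCoprime_reverse_iff {g h : F[X]} (hlam0 : lam ≠ 0) (hlam : lam ^ 2 = 1) (hg : g.Monic)
    (hgh : g * h = X ^ m - C lam) :
    IsCoprime g h.reverse ↔ (∃ α : F, α ≠ 0 ∧ g = C α * g.reverse) ∧ IsCoprime g h := by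
  have hrev : g.reverse * h.reverse = C (-lam) * (g * h) := by
    rw [reverse_mul_reverse_of_mul_eq hlam hgh, hgh]
  have hcop_iff {c : F} (hc : c ≠ 0) (hgc : g.reverse = C c * g) :
      IsCoprime g h.reverse ↔ IsCoprime g h := by
    rw [reverse_eq_C_mul_of_reverse_mul_reverse hg.ne_zero hc hgc hrev,
      isCoprime_mul_unit_left_right (isUnit_C.mpr (by simp [hc, hlam0]))]
  constructor
  · intro hcop
    have hdvd : g ∣ g.reverse := hcop.dvd_of_dvd_mul_right ⟨C (-lam) * h, by rw [hrev]; ring⟩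
    obtain ⟨c, hc, hgc⟩ : ∃ c : F, c ≠ 0 ∧ g.reverse = C c * g :=
      ⟨_, by simp [hg.ne_zero],
        eq_leadingCoeff_mul_of_monic_of_dvd_of_natDegree_le hg hdvd g.reverse_natDegree_le⟩
    refine ⟨⟨_, inv_ne_zero hc, ?_⟩, (hcop_iff hc hgc).mp hcop⟩
    rw [hgc, ← mul_assoc, ← C_mul, inv_mul_cancel₀ hc, C_1, one_mul]
  · rintro ⟨⟨α, hα, hgα⟩, hcop⟩
    have hgc : g.reverse = C α⁻¹ * g := by
      rw [eq_comm, ← mul_right_inj' (C_ne_zero.mpr hα), ← mul_assoc, ← C_mul, mul_inv_cancel₀ hα,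
        C_1, one_mul, ← hgα]
    exact (hcop_iff (inv_ne_zero hα) hgc).mpr hcop

end Field

theorem stmt6_general (F : Type*) [Field F]
    (lam : F) (hlam0 : lam ≠ 0) (hlam2 : lam ^ 2 = 1)
    (m : ℕ) (hm : 1 ≤ m)
    (f : Polynomial F) (hf : f = X ^ m - C lam)
    (g : Polynomial F) (hgmonic : g.Monic) (hgdvd : g ∣ f)
    -- the coefficient identification of F^m with F[x]/(x^m − λ)
    (blk : (Fin m → F) → Polynomial F ⧸ Ideal.span {f})
    (hblk : ∀ b, blk b
      = Ideal.Quotient.mk (Ideal.span {f}) (∑ k : Fin m, C (b k) * X ^ (k : ℕ))) :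
    -- C is LCD iff g is self-reciprocal and coprime to f/g
    ((∀ a : Fin m → F,
        blk a ∈ Ideal.span {Ideal.Quotient.mk (Ideal.span {f}) g} →
        (∀ b : Fin m → F, blk b ∈ Ideal.span {Ideal.Quotient.mk (Ideal.span {f}) g} →
          ∑ k, a k * b k = 0) →
        a = 0)
      ↔ (∃ α : F, α ≠ 0 ∧ g = Polynomial.C α * g.reverse) ∧ IsCoprime g (f / g)) := by
  subst hf
  have hgh : g * ((X ^ m - C lam) / g) = X ^ m - C lam :=
    EuclideanDomain.mul_div_cancel' hgmonic.ne_zero hgdvd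
  set h := (X ^ m - C lam) / g
  have hh : h.coeff 0 ≠ 0 := coeff_zero_ne_zero_of_dvd_X_pow_sub_C hlam0 hm (Dvd.intro_left g hgh)
  have hh0 : h ≠ 0 := fun h0 => hh (by rw [h0, coeff_zero])
  have hhr0 : h.reverse ≠ 0 := mt reverse_eq_zero.mp hh0
  have hdeg : g.natDegree + h.reverse.natDegree = m := by
    rw [natDegree_reverse_of_coeff_zero_ne_zero hh, ← natDegree_mul hgmonic.ne_zero hh0, hgh, natDegree_X_pow_sub_C]
  simp only [hblk, Ideal.Quotient.mk_mem_span_singleton_mk_iff hgdvd]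
  rw [lcd_iff_coeffDot, ← isCoprime_reverse_iff hlam0 hlam2 hgmonic hgh,
    ← forall_dvd_dvd_eq_zero_iff_isCoprime hgmonic.ne_zero hhr0 hdeg]
  refine forall₂_congr fun p hp => imp_congr_right fun _ => imp_congr_left ?_
  rw [forall_coeffDot_eq_zero_iff hgmonic.ne_zero (by omega),
    forall_coeff_mul_eq_zero_iff_dvd hlam2 (reverse_mul_reverse_of_mul_eq hlam2 hgh) hhr0 hdeg hp]

theorem stmt6 (F : Type*) [Field F] [Fintype F]
    (lam : F) (hlam0 : lam ≠ 0) (hlam2 : lam ^ 2 = 1)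
    (m : ℕ) (hm : 1 ≤ m)
    (f : Polynomial F) (hf : f = X ^ m - C lam)
    (g : Polynomial F) (hgmonic : g.Monic) (hgdvd : g ∣ f)
    -- the coefficient identification of F^m with F[x]/(x^m − λ)
    (blk : (Fin m → F) → Polynomial F ⧸ Ideal.span {f})
    (hblk : ∀ b, blk b
      = Ideal.Quotient.mk (Ideal.span {f}) (∑ k : Fin m, C (b k) * X ^ (k : ℕ))) :
    -- C is LCD iff g is self-reciprocal and coprime to f/g
    ((∀ a : Fin m → F,
        blk a ∈ Ideal.span {Ideal.Quotient.mk (Ideal.span {f}) g} →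
        (∀ b : Fin m → F, blk b ∈ Ideal.span {Ideal.Quotient.mk (Ideal.span {f}) g} →
          ∑ k, a k * b k = 0) →
        a = 0)
      ↔ (∃ α : F, α ≠ 0 ∧ g = Polynomial.C α * g.reverse) ∧ IsCoprime g (f / g)) :=
  stmt6_general F lam hlam0 hlam2 m hm f hf g hgmonic hgdvd blk hblk
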